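/- Every graph in which every cycle has odd length is a cactus; that is, any two distinct cycles of such a graph share at most one common vertex. -/

import Mathlib

open SimpleGraph Finset

open scoped Classical in
/-- The adjacency matrix of a graph over `ℝ` (using classical decidability). -/
noncomputable def adjMat {V : Type*} [Fintype V] [DecidableEq V] (G : SimpleGraph V) :
    Matrix V V ℝ :=
  fun a b => if G.Adj a b then 1 else 0

theorem adjMat_isHermitian {V : Type*} [Fintype V] [DecidableEq V] (G : SimpleGraph V) :
    (adjMat G).IsHermitian := by
  ext a b
  rw [Matrix.conjTranspose_apply]
  by_cases h : G.Adj a b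
  · simp [adjMat, h, h.symm]
  · simp [adjMat, h, mt (fun h' : G.Adj b a => h'.symm) h]

/-- The spectral radius (specRad) (largest adjacency eigenvalue) of a graph. -/
noncomputable def specRad {V : Type*} [Fintype V] [DecidableEq V]
    (G : SimpleGraph V) : ℝ :=
  ⨆ a : V, (adjMat_isHermitian G).eigenvalues a

/-- A cactus: any two distinct cycles (distinct as edge sets) share at most one vertex. -/
def IsCactus {V : Type*} [DecidableEq V] (G : SimpleGraph V) : Prop :=
  ∀ ⦃u v : V⦄ (c₁ : G.Walk u u) (c₂ : G.Walk v v), c₁.IsCycle → c₂.IsCycle →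
    c₁.edges.toFinset ≠ c₂.edges.toFinset →
      (c₁.support.toFinset ∩ c₂.support.toFinset).card ≤ 1

/-- A unicyclic graph: connected with exactly one cycle (one cycle edge set). -/
def Unicyclic {V : Type*} [DecidableEq V] (G : SimpleGraph V) : Prop :=
  G.Connected ∧ ∃! E : Finset (Sym2 V), ∃ (w : V) (c : G.Walk w w),
    c.IsCycle ∧ c.edges.toFinset = E

/-- The star `K_{1,n-1}` on `Fin n` with center `0`. -/
def starGraph (n : ℕ) : SimpleGraph (Fin n) where
  Adj a b := a ≠ b ∧ ((a : ℕ) = 0 ∨ (b : ℕ) = 0)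
  symm := by
    constructor
    intro a b h
    try dsimp only at h ⊢
    tauto
  loopless := by
    constructor
    intro a h
    try dsimp only at h ⊢
    tauto

/-- `K_{1,n-1}^+`: the star plus one edge between the leaves `1` and `2`. -/
def starPlus (n : ℕ) : SimpleGraph (Fin n) where
  Adj a b := a ≠ b ∧ ((a : ℕ) = 0 ∨ (b : ℕ) = 0 ∨ ((a : ℕ) ≤ 2 ∧ (b : ℕ) ≤ 2))
  symm := by
    constructor
    intro a b h
    try dsimp only at h ⊢
    tauto
  loopless := by
    constructor
    intro a h
    try dsimp only at h ⊢
    tauto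

/-- `H_n`: the star `K_{1,n-1}` plus `⌊(n-1)/2⌋` independent edges `(1,2), (3,4), …`
between pairs of leaves. -/
def Hgraph (n : ℕ) : SimpleGraph (Fin n) where
  Adj a b := a ≠ b ∧ ((a : ℕ) = 0 ∨ (b : ℕ) = 0 ∨
    ((a : ℕ) % 2 = 1 ∧ (b : ℕ) = a + 1) ∨ ((b : ℕ) % 2 = 1 ∧ (a : ℕ) = b + 1))
  symm := by
    constructor
    intro a b h
    try dsimp only at h ⊢
    tauto
  loopless := by
    constructor
    intro a h
    try dsimp only at h ⊢
    tauto

/-- Rewiring: delete the edges `v w` and add the edges `u w` for `w ∈ S`. -/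
def rewire {V : Type*} (G : SimpleGraph V) (u v : V) (S : Set V) : SimpleGraph V :=
  SimpleGraph.fromEdgeSet ((G.edgeSet \ {e | ∃ w ∈ S, e = s(v, w)}) ∪ {e | ∃ w ∈ S, e = s(u, w)})

/-- An edge lies in a triangle of `G`. -/
def InTriangle {V : Type*} (G : SimpleGraph V) (e : Sym2 V) : Prop :=
  ∃ a b c : V, G.Adj a b ∧ G.Adj b c ∧ G.Adj a c ∧
    (e = s(a, b) ∨ e = s(b, c) ∨ e = s(a, c))

/-! If two distinct cycles `C` and `D` shared two vertices, one of them, say `D`, would have an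
edge outside `C`, and a segment of `D` would be an ear of `C`: a path `P` between two distinct
vertices of `C` that meets `C` only at its ends and has an edge outside `C`. The two arcs `A`, `B`
of `C` between the ends of `P` close up with `P` to cycles of lengths `|A| + |P|` and `|B| + |P|`,
which together with `|C| = |A| + |B|` are three odd numbers with an even sum. -/

namespace SimpleGraph.Walk

variable {V : Type*} {G : SimpleGraph V}

lemma edges_eq_singleton_of_length_eq_one {u v : V} {p : G.Walk u v} (h : p.length = 1) :
    p.edges = [s(u, v)] := by
  cases p with
  | nil => simp at h
  | cons _ q => cases q with
    | nil => rfl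
    | cons => simp at h

lemma IsPath.start_notMem_support_tail {u v : V} {p : G.Walk u v} (hp : p.IsPath) :
    u ∉ p.support.tail :=
  (List.nodup_cons.mp (p.cons_tail_support ▸ hp.support_nodup)).1

lemma exists_eq_append_first_mem {S : Set V} {u v : V} (W : G.Walk u v) (hv : v ∈ S) :
    ∃ r ∈ S, ∃ (W₁ : G.Walk u r) (W₂ : G.Walk r v),
      W = W₁.append W₂ ∧ ∀ z ∈ W₁.support, z ∈ S → z = r := by
  induction W with
  | nil => exact ⟨_, hv, nil, nil, rfl, by simp⟩
  | @cons a b _ h W ih =>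
    by_cases ha : a ∈ S
    · exact ⟨a, ha, nil, cons h W, rfl, by simp⟩
    obtain ⟨r, hr, W₁, W₂, rfl, hW₁⟩ := ih hv
    refine ⟨r, hr, cons h W₁, W₂, rfl, ?_⟩
    intro z hz hzS
    rcases List.mem_cons.mp (support_cons h W₁ ▸ hz) with rfl | hz
    · exact absurd hzS ha
    · exact hW₁ z hz hzS

variable [DecidableEq V]

lemma IsCycle.exists_arcs {u p q : V} {C : G.Walk u u} (hC : C.IsCycle) (hp : p ∈ C.support)
    (hq : q ∈ C.support) (hpq : p ≠ q) :
    ∃ A B : G.Walk p q, A.IsPath ∧ B.IsPath ∧ C.edges.Perm (A.edges ++ B.edges) ∧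
      A.support ⊆ C.support ∧ B.support ⊆ C.support := by
  set C' := C.rotate p hp
  have hC' : C'.IsCycle := hC.rotate hp
  have hq' : q ∈ C'.support := (mem_support_rotate_iff ..).mpr hq
  have hsplit := C'.take_spec hq'
  have hB : (C'.dropUntil q hq').IsPath :=
    IsCycle.isPath_of_append_right (not_nil_of_ne hpq) (hsplit ▸ hC')
  refine ⟨C'.takeUntil q hq', (C'.dropUntil q hq').reverse, hC'.isPath_takeUntil hq', hB.reverse,
    ?_, ?_, ?_⟩
  · have hC'_edges : C'.edges = (C'.takeUntil q hq').edges ++ (C'.dropUntil q hq').edges := by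
      rw [← edges_append, hsplit]
    rw [edges_reverse]
    exact (rotate_edges ..).perm.symm.trans
      (hC'_edges ▸ (List.reverse_perm _).symm.append_left _)
  · intro z hz
    exact (mem_support_rotate_iff ..).mp (C'.support_takeUntil_subset_support hq' hz)
  · intro z hz
    rw [support_reverse, List.mem_reverse] at hz
    exact (mem_support_rotate_iff ..).mp (C'.support_dropUntil_subset_support hq' hz)

lemma IsCycle.edges_subset_of_ear (hodd : ∀ (u : V) (c : G.Walk u u), c.IsCycle → Odd c.length)
    {u p q : V} {C : G.Walk u u} (hC : C.IsCycle) {P : G.Walk p q} (hP : P.IsPath) (hpq : p ≠ q)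
    (hp : p ∈ C.support) (hq : q ∈ C.support)
    (hPC : ∀ z ∈ P.support, z ∈ C.support → z = p ∨ z = q) :
    P.edges ⊆ C.edges := by
  by_contra hout
  have arc_add_odd : ∀ D : G.Walk p q, D.IsPath → D.support ⊆ C.support → D.edges ⊆ C.edges →
      Odd (D.length + P.length) := by
    intro D hD hDC hDe
    have hcyc : (D.append P.reverse).IsCycle := by
      refine hD.isCycle_append hP.reverse (fun z hzD hzP => ?_) ?_
      rw [support_reverse] at hzP
      rcases hPC z (List.mem_reverse.mp (List.mem_of_mem_tail hzP))
        (hDC (List.mem_of_mem_tail hzD)) with rfl | rfl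
      · exact hD.start_notMem_support_tail hzD
      · exact hP.reverse.start_notMem_support_tail (support_reverse P ▸ hzP)
      by_contra! hshort
      have hD1 : D.length = 1 := by have := mt D.eq_of_length_eq_zero hpq; omega
      have hP1 : P.length = 1 := by
        have := mt P.eq_of_length_eq_zero hpq; have := hshort.2; rw [length_reverse] at this; omega
      rw [edges_eq_singleton_of_length_eq_one hD1] at hDe
      exact hout (edges_eq_singleton_of_length_eq_one hP1 ▸ hDe)
    simpa using hodd p _ hcyc
  obtain ⟨A, B, hA, hB, hperm, hAC, hBC⟩ := hC.exists_arcs hp hq hpq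
  have hlen : C.length = A.length + B.length := by simpa using hperm.length_eq
  obtain ⟨a, ha⟩ := arc_add_odd A hA hAC fun e he => hperm.mem_iff.mpr (List.mem_append_left _ he)
  obtain ⟨b, hb⟩ := arc_add_odd B hB hBC fun e he => hperm.mem_iff.mpr (List.mem_append_right _ he)
  obtain ⟨c, hc⟩ := hodd u C hC
  omega

lemma IsCycle.edges_subset_of_isPath (hodd : ∀ (u : V) (c : G.Walk u u), c.IsCycle → Odd c.length)
    {u p q : V} {C : G.Walk u u} (hC : C.IsCycle) {W : G.Walk p q} (hW : W.IsPath)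
    (hp : p ∈ C.support) (hq : q ∈ C.support) :
    W.edges ⊆ C.edges := by
  induction W with
  | nil => simp
  | @cons a b _ h W ih =>
    by_cases hb : b ∈ C.support
    · have hab : s(a, b) ∈ C.edges := by
        simpa using hC.edges_subset_of_ear hodd (IsPath.of_adj h) h.ne hp hb (by simp)
      rw [edges_cons]
      exact List.cons_subset.mpr ⟨hab, ih hW.of_cons hb hq⟩
    -- the first return of `W` to `C` closes an ear of `C` that starts with the edge `s(a, b)`
    exfalso
    obtain ⟨r, hr, W₁, W₂, rfl, hW₁⟩ := W.exists_eq_append_first_mem (S := {z | z ∈ C.support}) hq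
    rw [cons_isPath_iff, mem_support_append_iff, not_or] at hW
    have hear : (cons h W₁).edges ⊆ C.edges := by
      refine hC.edges_subset_of_ear hodd (hW.1.of_append_left.cons hW.2.1) ?_ hp hr ?_
      · rintro rfl
        exact hW.2.1 W₁.end_mem_support
      · intro z hz hzC
        rcases List.mem_cons.mp (support_cons h W₁ ▸ hz) with rfl | hz
        · exact .inl rfl
        · exact .inr (hW₁ z hz hzC)
    have hab : s(a, b) ∈ C.edges := hear (by simp)
    exact hb (C.snd_mem_support_of_mem_edges hab)

lemma IsCycle.edges_subset_of_two_mem_support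
    (hodd : ∀ (u : V) (c : G.Walk u u), c.IsCycle → Odd c.length)
    {u v x y : V} {C : G.Walk u u} {D : G.Walk v v} (hC : C.IsCycle) (hD : D.IsCycle)
    (hxy : x ≠ y) (hxC : x ∈ C.support) (hxD : x ∈ D.support) (hyC : y ∈ C.support)
    (hyD : y ∈ D.support) :
    D.edges ⊆ C.edges := by
  obtain ⟨A, B, hA, hB, hperm, -, -⟩ := hD.exists_arcs hxD hyD hxy
  intro e he
  rcases List.mem_append.mp (hperm.mem_iff.mp he) with he | he
  · exact hC.edges_subset_of_isPath hodd hA hxC hyC he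
  · exact hC.edges_subset_of_isPath hodd hB hxC hyC he

end SimpleGraph.Walk

theorem odd_cycle_graph_is_cactus_general {V : Type*} [DecidableEq V]
    (G : SimpleGraph V)
    (hodd : ∀ (u : V) (c : G.Walk u u), c.IsCycle → Odd c.length) :
    IsCactus G := by
  intro u v c₁ c₂ h₁ h₂ hne
  by_contra! hcard
  obtain ⟨x, hx, y, hy, hxy⟩ := Finset.one_lt_card.mp hcard
  simp only [Finset.mem_inter, List.mem_toFinset] at hx hy
  refine hne (Finset.ext fun e => ?_)
  simp only [List.mem_toFinset]
  exact ⟨fun he => h₂.edges_subset_of_two_mem_support hodd h₁ hxy hx.2 hx.1 hy.2 hy.1 he,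
    fun he => h₁.edges_subset_of_two_mem_support hodd h₂ hxy hx.1 hx.2 hy.1 hy.2 he⟩

theorem odd_cycle_graph_is_cactus {V : Type*} [Fintype V] [DecidableEq V]
    (G : SimpleGraph V)
    (hodd : ∀ (u : V) (c : G.Walk u u), c.IsCycle → Odd c.length) :
    IsCactus G :=
  odd_cycle_graph_is_cactus_general G hodd
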